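/- Let ν, γ ∈ (0,1) and let 𝒮 = K₁ ⊔ ... ⊔ K_H be pairwise disjoint subintervals of an interval I of equal length, that are (ν,γ)-uniformly distributed in I: there is a partition of I into L ≤ γH intervals I₁,...,I_L of equal length ℓ ∈ [ν, 2ν] such that for each j, #{i : K_i ⊂ I_j} ∈ [(1-γ)H/L, (1+γ)H/L]. Then there exists a universal constant C such that for any C¹ function G on I: |∫_{𝒮} G dλ - (λ(𝒮)/λ(I)) ∫_I G dλ| ≤ C (ν‖G‖_{C¹} + γ‖G‖_{C⁰}) λ(𝒮). -/

import Mathlib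

open MeasureTheory intervalIntegral Finset
open scoped NNReal

/-!
Cut `[a, b]` into the `L` blocks `I_j = [a + jℓ, a + (j+1)ℓ]`. If `K_i ⊆ I_j`, comparing both
with the value of `G` at the left end of `K_i` (mean value theorem) shows that `∫_{K_i} G`
differs from the proportional share `(κ/ℓ) ∫_{I_j} G` by `O(‖G'‖ κ ℓ)`. Summing over the
`≈ H/L` intervals in each block replaces `∑_i ∫_{K_i} G` by `(H/L) ∑_j (κ/ℓ) ∫_{I_j} G`, which is
the proportional share of `∫_a^b G`; the counting hypothesis makes the error of the
replacement `O(γ ‖G‖ H κ)`, and the at most `γH` intervals lying in no single block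
contribute another `O(γ ‖G‖ H κ)`.
-/

theorem lipschitzOnWith_Icc_of_nnnorm_deriv_le {E : Type*} [NormedAddCommGroup E]
    [NormedSpace ℝ E] {f : ℝ → E} {a b : ℝ} {C : ℝ≥0} (hab : a ≠ b)
    (hc : ContinuousOn f (Set.Icc a b)) (hd : DifferentiableOn ℝ f (Set.Ioo a b))
    (bound : ∀ x ∈ Set.Ioo a b, ‖deriv f x‖₊ ≤ C) :
    LipschitzOnWith C f (Set.Icc a b) := by
  rw [← closure_Ioo hab] at hc ⊢
  refine LipschitzOnWith.closure hc ((convex_Ioo a b).lipschitzOnWith_of_nnnorm_deriv_le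
    (fun x hx => hd.differentiableAt (isOpen_Ioo.mem_nhds hx)) bound)

theorem abs_integral_sub_mul_le {f : ℝ → ℝ} {K : ℝ≥0} {c d p : ℝ}
    (hf : LipschitzOnWith K f (Set.Icc c d)) (hcd : c ≤ d) (hp : p ∈ Set.Icc c d) :
    |(∫ x in c..d, f x) - (d - c) * f p| ≤ K * (d - c) ^ 2 := by
  have hint : IntervalIntegrable f volume c d :=
    (hf.continuousOn.mono (Set.uIcc_of_le hcd).subset).intervalIntegrable
  have hdist : ∀ x ∈ Set.uIoc c d, ‖f x - f p‖ ≤ K * (d - c) := by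
    intro x hx
    rw [Set.uIoc_of_le hcd] at hx
    calc ‖f x - f p‖ = dist (f x) (f p) := (dist_eq_norm _ _).symm
      _ ≤ K * dist x p := hf.dist_le_mul x (Set.Ioc_subset_Icc_self hx) p hp
      _ ≤ K * (d - c) := by
          gcongr
          rw [Real.dist_eq, abs_le]
          constructor <;> linarith [hx.1, hx.2, hp.1, hp.2]
  have h := norm_integral_le_of_norm_le_const hdist
  rwa [integral_sub hint intervalIntegrable_const, intervalIntegral.integral_const, smul_eq_mul,
    abs_of_nonneg (sub_nonneg.2 hcd), Real.norm_eq_abs, mul_assoc, ← sq] at h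

theorem abs_integral_sub_div_mul_integral_le {f : ℝ → ℝ} {K : ℝ≥0} {c d c' d' : ℝ}
    (hf : LipschitzOnWith K f (Set.Icc c' d')) (hc : c' ≤ c) (hcd : c ≤ d) (hd : d ≤ d')
    (hcd' : c' < d') :
    |(∫ x in c..d, f x) - (d - c) / (d' - c') * ∫ x in c'..d', f x| ≤
      K * (d - c) * ((d - c) + (d' - c')) := by
  -- both averages are within `K ×` length of the value of `f` at `c`
  have hp : c ∈ Set.Icc c' d' := ⟨hc, hcd.trans hd⟩
  have hsmall := abs_integral_sub_mul_le (hf.mono (Set.Icc_subset_Icc hc hd)) hcd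
    (Set.left_mem_Icc.2 hcd)
  have hlarge := abs_integral_sub_mul_le hf hcd'.le hp
  have hpos : 0 < d' - c' := sub_pos.2 hcd'
  have hsplit : (∫ x in c..d, f x) - (d - c) / (d' - c') * ∫ x in c'..d', f x =
      ((∫ x in c..d, f x) - (d - c) * f c) -
        (d - c) / (d' - c') * ((∫ x in c'..d', f x) - (d' - c') * f c) := by
    field_simp
    ring
  rw [hsplit]
  calc |((∫ x in c..d, f x) - (d - c) * f c) -
        (d - c) / (d' - c') * ((∫ x in c'..d', f x) - (d' - c') * f c)|
    _ ≤ |(∫ x in c..d, f x) - (d - c) * f c| +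
        (d - c) / (d' - c') * |(∫ x in c'..d', f x) - (d' - c') * f c| := by
        refine (abs_sub _ _).trans_eq ?_
        rw [abs_mul, abs_of_nonneg (div_nonneg (sub_nonneg.2 hcd) hpos.le)]
    _ ≤ K * (d - c) ^ 2 + (d - c) / (d' - c') * (K * (d' - c') ^ 2) := by
        gcongr
    _ = K * (d - c) * ((d - c) + (d' - c')) := by
        field_simp

theorem abs_integral_le_mul_sub {f : ℝ → ℝ} {c d M : ℝ} (hcd : c ≤ d)
    (hf : ∀ x ∈ Set.Icc c d, |f x| ≤ M) : |∫ x in c..d, f x| ≤ M * (d - c) := by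
  have h := norm_integral_le_of_norm_le_const (f := f) (C := M) fun x hx => by
    rw [Set.uIoc_of_le hcd] at hx
    exact hf x (Set.Ioc_subset_Icc_self hx)
  rwa [abs_of_nonneg (sub_nonneg.2 hcd)] at h

theorem abs_sum_sub_mul_le {ι : Type*} (S : Finset ι) (F : ι → ℝ) {c n ε : ℝ}
    (h : ∀ i ∈ S, |F i - c| ≤ ε) :
    |∑ i ∈ S, F i - n * c| ≤ #S * ε + |(#S : ℝ) - n| * |c| := by
  have hsplit : ∑ i ∈ S, F i - n * c = ∑ i ∈ S, (F i - c) + (#S - n) * c := by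
    rw [sum_sub_distrib, sum_const, nsmul_eq_mul]
    ring
  calc |∑ i ∈ S, F i - n * c| ≤ ∑ i ∈ S, |F i - c| + |(#S - n) * c| := by
        rw [hsplit]
        exact (abs_add_le _ _).trans (by gcongr; exact abs_sum_le_sum_abs _ _)
    _ ≤ #S * ε + |(#S : ℝ) - n| * |c| := by
        rw [abs_mul]
        gcongr
        exact (sum_le_sum h).trans_eq (by rw [sum_const, nsmul_eq_mul])

theorem abs_sub_le_mul_of_le_of_le {x n γ : ℝ} (hlo : (1 - γ) * n ≤ x) (hhi : x ≤ (1 + γ) * n) :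
    |x - n| ≤ γ * n :=
  abs_le.2 ⟨by linarith, by linarith⟩

section Blocks

variable {ι β : Type*} [DecidableEq ι] {s : Finset ι} {t : Finset β} {S : β → Finset ι}
  {n γ : ℝ}

theorem abs_card_biUnion_sub_le (hS : (t : Set β).PairwiseDisjoint S)
    (hcard : ∀ j ∈ t, |(#(S j) : ℝ) - n| ≤ γ * n) :
    |(#(t.biUnion S) : ℝ) - #t * n| ≤ γ * (#t * n) := by
  have hdiff : (#(t.biUnion S) : ℝ) - #t * n = ∑ j ∈ t, ((#(S j) : ℝ) - n) := by
    rw [card_biUnion hS, sum_sub_distrib, sum_const, nsmul_eq_mul]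
    push_cast
    rfl
  rw [hdiff]
  calc |∑ j ∈ t, ((#(S j) : ℝ) - n)| ≤ ∑ j ∈ t, |(#(S j) : ℝ) - n| := abs_sum_le_sum_abs _ _
    _ ≤ ∑ _j ∈ t, γ * n := sum_le_sum hcard
    _ = γ * (#t * n) := by rw [sum_const, nsmul_eq_mul]; ring

theorem abs_sum_biUnion_sub_mul_sum_le (hS : (t : Set β).PairwiseDisjoint S) {F : ι → ℝ}
    {c : β → ℝ} {ε B : ℝ} (hFc : ∀ j ∈ t, ∀ i ∈ S j, |F i - c j| ≤ ε)
    (hc : ∀ j ∈ t, |c j| ≤ B) (hcard : ∀ j ∈ t, |(#(S j) : ℝ) - n| ≤ γ * n) :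
    |∑ i ∈ t.biUnion S, F i - n * ∑ j ∈ t, c j| ≤
      #(t.biUnion S) * ε + γ * (#t * n) * B := by
  have hsplit : ∑ i ∈ t.biUnion S, F i - n * ∑ j ∈ t, c j =
      ∑ j ∈ t, (∑ i ∈ S j, F i - n * c j) := by
    rw [sum_biUnion hS, mul_sum, sum_sub_distrib]
  rw [hsplit]
  calc |∑ j ∈ t, (∑ i ∈ S j, F i - n * c j)|
      ≤ ∑ j ∈ t, |∑ i ∈ S j, F i - n * c j| := abs_sum_le_sum_abs _ _
    _ ≤ ∑ j ∈ t, (#(S j) * ε + γ * n * B) := by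
        refine sum_le_sum fun j hj => (abs_sum_sub_mul_le _ _ (hFc j hj)).trans ?_
        gcongr
        · exact (abs_nonneg _).trans (hcard j hj)
        · exact hcard j hj
        · exact hc j hj
    _ = #(t.biUnion S) * ε + γ * (#t * n) * B := by
        rw [sum_add_distrib, ← sum_mul, sum_const, nsmul_eq_mul, card_biUnion hS]
        push_cast
        ring

theorem abs_sum_sub_mul_sum_le_of_blocks (hSs : ∀ j ∈ t, S j ⊆ s)
    (hS : (t : Set β).PairwiseDisjoint S) {F : ι → ℝ} {c : β → ℝ} {ε B : ℝ}
    (hε : 0 ≤ ε) (hB : 0 ≤ B) (hFc : ∀ j ∈ t, ∀ i ∈ S j, |F i - c j| ≤ ε)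
    (hF : ∀ i ∈ s, |F i| ≤ B) (hc : ∀ j ∈ t, |c j| ≤ B)
    (hcard : ∀ j ∈ t, |(#(S j) : ℝ) - n| ≤ γ * n) (hs : #t * n = #s) :
    |∑ i ∈ s, F i - n * ∑ j ∈ t, c j| ≤ (1 + γ) * #s * ε + 2 * γ * #s * B := by
  set U := t.biUnion S
  have hUs : U ⊆ s := biUnion_subset.2 hSs
  have hU := abs_card_biUnion_sub_le hS hcard
  rw [hs] at hU
  have hcovered := abs_sum_biUnion_sub_mul_sum_le hS hFc hc hcard
  rw [hs] at hcovered
  -- the blocks hold at least `(1 - γ) #s` indices, so at most `γ #s` are left over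
  have hrest : |∑ i ∈ s \ U, F i| ≤ γ * #s * B := by
    have hcard_rest : (#(s \ U) : ℝ) ≤ γ * #s := by
      rw [card_sdiff_of_subset hUs, Nat.cast_sub (card_le_card hUs)]
      linarith [(abs_le.1 hU).1]
    calc |∑ i ∈ s \ U, F i| ≤ ∑ i ∈ s \ U, |F i| := abs_sum_le_sum_abs _ _
      _ ≤ ∑ _i ∈ s \ U, B := sum_le_sum fun i hi => hF i (mem_sdiff.1 hi).1
      _ ≤ γ * #s * B := by rw [sum_const, nsmul_eq_mul]; gcongr
  have hUε : (#U : ℝ) * ε ≤ (1 + γ) * #s * ε := by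
    gcongr
    linarith [(abs_le.1 hU).2]
  rw [← sum_sdiff hUs]
  calc |∑ i ∈ s \ U, F i + ∑ i ∈ U, F i - n * ∑ j ∈ t, c j|
      ≤ |∑ i ∈ s \ U, F i| + |∑ i ∈ U, F i - n * ∑ j ∈ t, c j| := by
        rw [add_sub_assoc]; exact abs_add_le _ _
    _ ≤ (1 + γ) * #s * ε + 2 * γ * #s * B := by linarith

end Blocks

-- `{i < H : K_i ⊆ I_j}` for `K_i = [u i, u i + κ]` and `I_j = [a + jℓ, a + (j+1)ℓ]`
noncomputable def blockIndices (H : ℕ) (u : ℕ → ℝ) (κ a ℓ : ℝ) (j : ℕ) : Finset ℕ :=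
  (range H).filter (fun i => a + j * ℓ ≤ u i ∧ u i + κ ≤ a + (j + 1) * ℓ)

section BlockIndices

variable {H : ℕ} {u : ℕ → ℝ} {κ a ℓ : ℝ}

theorem le_of_mem_blockIndices {i j : ℕ} (hi : i ∈ blockIndices H u κ a ℓ j) : κ ≤ ℓ := by
  obtain ⟨-, hlo, hhi⟩ := mem_filter.1 hi
  linarith

theorem disjoint_blockIndices_of_lt (hκ : 0 < κ) {j j' : ℕ} (hjj' : j < j') :
    Disjoint (blockIndices H u κ a ℓ j) (blockIndices H u κ a ℓ j') := by
  refine disjoint_left.2 fun i hi hi' => ?_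
  obtain ⟨-, -, hhi⟩ := mem_filter.1 hi
  obtain ⟨-, hlo', -⟩ := mem_filter.1 hi'
  have hℓ : 0 < ℓ := hκ.trans_le (le_of_mem_blockIndices hi)
  have : ((j : ℝ) + 1) * ℓ ≤ j' * ℓ := by gcongr; exact_mod_cast hjj'
  linarith

theorem pairwiseDisjoint_blockIndices (hκ : 0 < κ) (s : Set ℕ) :
    s.PairwiseDisjoint (blockIndices H u κ a ℓ) := by
  intro j _ j' _ hne
  rcases hne.lt_or_gt with h | h
  · exact disjoint_blockIndices_of_lt hκ h
  · exact (disjoint_blockIndices_of_lt hκ h).symm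

end BlockIndices

theorem sum_integral_blocks {f : ℝ → ℝ} {a ℓ : ℝ} {L : ℕ} (hℓ : 0 ≤ ℓ)
    (hf : ContinuousOn f (Set.Icc a (a + L * ℓ))) :
    ∑ j ∈ range L, ∫ x in a + j * ℓ..a + (j + 1) * ℓ, f x = ∫ x in a..a + L * ℓ, f x := by
  have hint : ∀ k < L, IntervalIntegrable f volume (a + k * ℓ) (a + (k + 1 : ℕ) * ℓ) := by
    intro k hk
    have hk' : ((k + 1 : ℕ) : ℝ) ≤ L := by exact_mod_cast hk
    refine (hf.mono ?_).intervalIntegrable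
    rw [Set.uIcc_of_le (by gcongr; simp)]
    exact Set.Icc_subset_Icc (le_add_of_nonneg_right (by positivity)) (by gcongr)
  simpa using sum_integral_adjacent_intervals hint

theorem abs_sum_integral_sub_le {G : ℝ → ℝ} {K : ℝ≥0} {a ℓ κ γ G0 : ℝ} {H L : ℕ}
    {u : ℕ → ℝ} (hκ : 0 < κ) (hκℓ : κ ≤ ℓ) (hL : 0 < L)
    (hG : LipschitzOnWith K G (Set.Icc a (a + L * ℓ)))
    (hG0 : ∀ x ∈ Set.Icc a (a + L * ℓ), |G x| ≤ G0)
    (hsub : ∀ i < H, Set.Icc (u i) (u i + κ) ⊆ Set.Icc a (a + L * ℓ))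
    (hcount : ∀ j < L, |(#(blockIndices H u κ a ℓ j) : ℝ) - H / L| ≤ γ * (H / L)) :
    |(∑ i ∈ range H, ∫ x in u i..u i + κ, G x) - H * κ / (L * ℓ) * ∫ x in a..a + L * ℓ, G x| ≤
      (1 + γ) * H * (2 * K * κ * ℓ) + 2 * γ * H * (κ * G0) := by
  have hℓ : 0 < ℓ := hκ.trans_le hκℓ
  have hL' : (0 : ℝ) < L := by exact_mod_cast hL
  have hG0nn : 0 ≤ G0 :=
    (abs_nonneg _).trans (hG0 a (Set.left_mem_Icc.2 (le_add_of_nonneg_right (by positivity))))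
  have hblock : ∀ j < L, Set.Icc (a + j * ℓ) (a + (j + 1) * ℓ) ⊆ Set.Icc a (a + L * ℓ) := by
    intro j hj
    have hj' : (j : ℝ) + 1 ≤ L := by exact_mod_cast hj
    exact Set.Icc_subset_Icc (le_add_of_nonneg_right (by positivity)) (by gcongr)
  have hK : ∀ i < H, u i ≤ u i + κ := fun i _ => by linarith
  have hshare : H * κ / (L * ℓ) * ∫ x in a..a + L * ℓ, G x =
      (H / L) * ∑ j ∈ range L, κ / ℓ * ∫ x in a + j * ℓ..a + (j + 1) * ℓ, G x := by
    rw [← mul_sum, sum_integral_blocks hℓ.le hG.continuousOn]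
    field_simp
  rw [hshare]
  have key := abs_sum_sub_mul_sum_le_of_blocks (s := range H) (t := range L)
    (fun j _ => filter_subset _ _) (pairwiseDisjoint_blockIndices hκ _)
    (F := fun i => ∫ x in u i..u i + κ, G x)
    (c := fun j => κ / ℓ * ∫ x in a + j * ℓ..a + (j + 1) * ℓ, G x)
    (ε := 2 * K * κ * ℓ) (B := κ * G0) (by positivity) (by positivity) ?_ ?_ ?_
    (fun j hj => hcount j (mem_range.1 hj)) (by simp only [card_range]; field_simp)
  · simpa only [card_range] using key
  · intro j hj i hi
    obtain ⟨-, hlo, hhi⟩ := mem_filter.1 hi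
    have h := abs_integral_sub_div_mul_integral_le (hG.mono (hblock j (mem_range.1 hj)))
      hlo (by linarith) hhi (by linarith)
    rw [show u i + κ - u i = κ by ring, show a + (j + 1) * ℓ - (a + j * ℓ) = ℓ by ring] at h
    refine h.trans ?_
    nlinarith [mul_nonneg (mul_nonneg K.coe_nonneg hκ.le) (sub_nonneg.2 hκℓ)]
  · intro i hi
    have h := abs_integral_le_mul_sub (hK i (mem_range.1 hi))
      fun x hx => hG0 x (hsub i (mem_range.1 hi) hx)
    linarith
  · intro j hj
    have h := abs_integral_le_mul_sub (by linarith : a + j * ℓ ≤ a + (j + 1) * ℓ)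
      fun x hx => hG0 x (hblock j (mem_range.1 hj) hx)
    rw [show a + (j + 1) * ℓ - (a + j * ℓ) = ℓ by ring] at h
    rw [abs_mul, abs_of_pos (div_pos hκ hℓ)]
    calc κ / ℓ * |∫ x in a + j * ℓ..a + (j + 1) * ℓ, G x| ≤ κ / ℓ * (G0 * ℓ) := by gcongr
      _ = κ * G0 := by field_simp

/-- Extrapolation lemma: if a disjoint family of equal-length intervals is
(ν,γ)-uniformly distributed in I = [a,b], then for any C¹ function G the integral over
the family is close to the proportional share of the integral over I. -/
theorem stmt10 : ∃ C > 0, ∀ (ν γ : ℝ), ν ∈ Set.Ioo (0:ℝ) 1 → γ ∈ Set.Ioo (0:ℝ) 1 →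
    ∀ (a b κ ℓ : ℝ) (H L : ℕ) (u : ℕ → ℝ) (G : ℝ → ℝ) (G0 G1 : ℝ),
    a < b → 0 < κ → 0 < H → 0 < L →
    -- the intervals K_i = [u i, u i + κ] are pairwise disjoint subintervals of [a,b]
    (∀ i < H, Set.Icc (u i) (u i + κ) ⊆ Set.Icc a b) →
    (∀ i < H, ∀ j < H, i ≠ j →
      Disjoint (Set.Icc (u i) (u i + κ)) (Set.Icc (u j) (u j + κ))) →
    -- partition of [a,b] into L intervals of equal length ℓ ∈ [ν, 2ν]
    ν ≤ ℓ → ℓ ≤ 2 * ν → b = a + L * ℓ → (L : ℝ) ≤ γ * H →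
    -- uniform distribution of the K_i among the partition intervals
    (∀ j < L,
      (1 - γ) * H / L ≤ (((Finset.range H).filter
          (fun i => a + j * ℓ ≤ u i ∧ u i + κ ≤ a + (j+1) * ℓ)).card : ℝ) ∧
      (((Finset.range H).filter
          (fun i => a + j * ℓ ≤ u i ∧ u i + κ ≤ a + (j+1) * ℓ)).card : ℝ)
        ≤ (1 + γ) * H / L) →
    -- regularity and bounds on G
    ContDiffOn ℝ 1 G (Set.Icc a b) →
    (∀ x ∈ Set.Icc a b, |G x| ≤ G0) → (∀ x ∈ Set.Icc a b, |deriv G x| ≤ G1) →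
    |(∑ i ∈ Finset.range H, ∫ x in (u i)..(u i + κ), G x) -
        ((H * κ) / (b - a)) * ∫ x in a..b, G x| ≤
      C * (ν * (G0 + G1) + γ * G0) * (H * κ) := by
  refine ⟨8, by norm_num, ?_⟩
  rintro ν γ ⟨hν, -⟩ ⟨hγ, hγ1⟩ a b κ ℓ H L u G G0 G1 hab hκ hH hL hsub - hνℓ hℓν rfl - hcount
    hG hG0 hG1
  have hG1nn : 0 ≤ G1 := (abs_nonneg _).trans (hG1 a (Set.left_mem_Icc.2 hab.le))
  have hκℓ : κ ≤ ℓ := by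
    have hpos : (0 : ℝ) < #(blockIndices H u κ a ℓ 0) :=
      lt_of_lt_of_le (by have := sub_pos.2 hγ1; positivity) (hcount 0 hL).1
    obtain ⟨i, hi⟩ := card_pos.1 (by exact_mod_cast hpos)
    exact le_of_mem_blockIndices hi
  have hLip : LipschitzOnWith G1.toNNReal G (Set.Icc a (a + L * ℓ)) :=
    lipschitzOnWith_Icc_of_nnnorm_deriv_le hab.ne hG.continuousOn
      ((hG.differentiableOn one_ne_zero).mono Set.Ioo_subset_Icc_self) fun x hx => by
        rw [Real.le_toNNReal_iff_coe_le hG1nn, coe_nnnorm, Real.norm_eq_abs]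
        exact hG1 x (Set.Ioo_subset_Icc_self hx)
  have hcount' : ∀ j < L, |(#(blockIndices H u κ a ℓ j) : ℝ) - H / L| ≤ γ * (H / L) :=
    fun j hj => abs_sub_le_mul_of_le_of_le ((mul_div_assoc _ _ _).symm.trans_le (hcount j hj).1)
      ((hcount j hj).2.trans_eq (mul_div_assoc _ _ _))
  have key := abs_sum_integral_sub_le hκ hκℓ hL hLip hG0 hsub hcount'
  rw [Real.coe_toNNReal _ hG1nn] at key
  rw [add_sub_cancel_left]
  refine key.trans ?_
  have hHκ : (0 : ℝ) ≤ H * κ := by positivity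
  have hG0nn : 0 ≤ G0 := (abs_nonneg _).trans (hG0 a (Set.left_mem_Icc.2 hab.le))
  nlinarith [mul_nonneg (mul_nonneg hG1nn hHκ) (sub_nonneg.2 hℓν),
    mul_nonneg (mul_nonneg hG1nn hHκ) (mul_nonneg (sub_nonneg.2 hγ1.le) (hν.le.trans hνℓ)),
    mul_nonneg (mul_nonneg hG0nn hHκ) hν.le, mul_nonneg (mul_nonneg hG0nn hHκ) hγ.le]
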